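/- Let (D, σ) be a strongly connected labeled digraph such that for every arc a = (u,v) of D there is also an arc a' = (v,u) with σ(a') = σ(a)^{-1} (i.e., Doubling(D) = D). Then D has a consistent labeling Γ : V(D) → [ℓ] (meaning σ(a)(Γ(u)) = Γ(v) for every arc a = (u,v)) if and only if D contains no colorful walk. -/
import Mathlib

/-- Directed walks in a permutation-labeled digraph, recording the composed
permutation (applied left-to-right along the walk). -/
inductive WalkP {V : Type*} {l : ℕ} (A : V → V → Equiv.Perm (Fin l) → Prop) :
    V → V → Equiv.Perm (Fin l) → Prop
  | nil (v : V) : WalkP A v v 1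
  | cons {u v w : V} {π ρ : Equiv.Perm (Fin l)} :
      A u v π → WalkP A v w ρ → WalkP A u w (ρ * π)

/-- The labeled digraph with arcs `A` contains a colorful walk: a strongly
connected subgraph (arcs `B`, vertices `S`) together with a vertex `v ∈ S`
such that for every `i`, some closed `v`-walk in the subgraph moves `i`. -/
def HasColorfulWalk {V : Type*} {l : ℕ} (A : V → V → Equiv.Perm (Fin l) → Prop) : Prop :=
  ∃ (S : Set V) (B : V → V → Equiv.Perm (Fin l) → Prop) (v : V),
    (∀ u w π, B u w π → A u w π) ∧
    (∀ u w π, B u w π → u ∈ S ∧ w ∈ S) ∧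
    (∀ u ∈ S, ∀ w ∈ S, Relation.ReflTransGen (fun a b => ∃ π, B a b π) u w) ∧
    v ∈ S ∧
    (∀ i : Fin l, ∃ π, WalkP B v v π ∧ π i ≠ i)

theorem walkP_single {V : Type*} {l : ℕ} {A : V → V → Equiv.Perm (Fin l) → Prop}
    {u v : V} {π : Equiv.Perm (Fin l)} (h : A u v π) : WalkP A u v π := by
  simpa using WalkP.cons h (WalkP.nil v)

theorem walkP_trans {V : Type*} {l : ℕ} {A : V → V → Equiv.Perm (Fin l) → Prop}
    {u v w : V} {π ρ : Equiv.Perm (Fin l)}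
    (h1 : WalkP A u v π) (h2 : WalkP A v w ρ) : WalkP A u w (ρ * π) := by
  induction h1 with
  | nil => simpa using h2
  | cons ha ht ih =>
      have := WalkP.cons ha (ih h2)
      simpa [mul_assoc] using this

theorem walkP_reverse {V : Type*} {l : ℕ} {A : V → V → Equiv.Perm (Fin l) → Prop}
    (hd : ∀ u v π, A u v π → A v u π⁻¹)
    {u v : V} {π : Equiv.Perm (Fin l)} (h : WalkP A u v π) : WalkP A v u π⁻¹ := by
  induction h with
  | nil => simpa using WalkP.nil _
  | cons ha _ ih =>
      have := walkP_trans ih (walkP_single (hd _ _ _ ha))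
      simpa [mul_inv_rev] using this

theorem walkP_of_rtg {V : Type*} {l : ℕ} {A : V → V → Equiv.Perm (Fin l) → Prop}
    {u v : V} (h : Relation.ReflTransGen (fun a b => ∃ π, A a b π) u v) :
    ∃ π, WalkP A u v π := by
  induction h with
  | refl => exact ⟨1, WalkP.nil _⟩
  | tail _ hr ih =>
      obtain ⟨ρ, hρ⟩ := ih
      obtain ⟨π, hπ⟩ := hr
      exact ⟨π * ρ, walkP_trans hρ (walkP_single hπ)⟩

theorem walkP_consistent {V : Type*} {l : ℕ} {A : V → V → Equiv.Perm (Fin l) → Prop}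
    {Γ : V → Fin l} (hΓ : ∀ u v π, A u v π → π (Γ u) = Γ v)
    {u v : V} {π : Equiv.Perm (Fin l)} (h : WalkP A u v π) : π (Γ u) = Γ v := by
  induction h with
  | nil => simp
  | cons ha _ ih => simp [hΓ _ _ _ ha, ih]

/-- For a strongly connected labeled digraph with `Doubling(D) = D`
(every arc has a reverse arc labeled by the inverse permutation), a consistent
labeling exists iff there is no colorful walk. -/
theorem stmt_9 {V : Type*} {l : ℕ} (A : V → V → Equiv.Perm (Fin l) → Prop)
    (hsc : ∀ u v : V, Relation.ReflTransGen (fun a b => ∃ π, A a b π) u v)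
    (hdouble : ∀ u v π, A u v π → A v u π⁻¹) :
    (∃ Γ : V → Fin l, ∀ u v π, A u v π → π (Γ u) = Γ v) ↔ ¬ HasColorfulWalk A := by
  constructor
  · rintro ⟨Γ, hΓ⟩ ⟨S, B, v, hBA, _, _, _, hcol⟩
    have hB : ∀ x y π, B x y π → π (Γ x) = Γ y := fun x y π h => hΓ x y π (hBA x y π h)
    obtain ⟨π, hw, hne⟩ := hcol (Γ v)
    exact hne (walkP_consistent hB hw)
  · intro hnc
    rcases isEmpty_or_nonempty V with hV | hV
    · exact ⟨fun v => isEmptyElim v, fun u => isEmptyElim u⟩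
    · obtain ⟨v₀⟩ := hV
      have hfix : ∃ i₀ : Fin l, ∀ π, WalkP A v₀ v₀ π → π i₀ = i₀ := by
        by_contra hcon
        push_neg at hcon
        exact hnc ⟨Set.univ, A, v₀, fun _ _ _ h => h, fun _ _ _ _ => ⟨trivial, trivial⟩,
          fun u _ w _ => hsc u w, trivial, hcon⟩
      obtain ⟨i₀, hi₀⟩ := hfix
      have hwalk : ∀ u : V, ∃ π, WalkP A v₀ u π := fun u => walkP_of_rtg (hsc v₀ u)
      choose f hf using hwalk
      refine ⟨fun u => f u i₀, fun u v π h => ?_⟩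
      have h1 : WalkP A v₀ v (π * f u) := walkP_trans (hf u) (walkP_single h)
      have h2 : WalkP A v₀ v₀ ((f v)⁻¹ * (π * f u)) :=
        walkP_trans h1 (walkP_reverse hdouble (hf v))
      have := hi₀ _ h2
      simp only [Equiv.Perm.mul_apply] at this
      exact (Equiv.Perm.inv_eq_iff_eq (f := f v)).mp this
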